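/- (Dark states of the fan/multipod system.) Let Ne = 1 and suppose the ground block of H is 𝓔·I (all Ng ground energies equal to a real number 𝓔), with couplings V i = H (inl i) (inr 1) ∈ ℂ and arbitrary real excited energy H (inr 1) (inr 1). For any unit vector ψ supported on the ground subspace (P ψ = ψ), with ground components c i = ψ (inl i), the pure state ψψᴴ is a dark state — L(ψψᴴ) = 0 and ψψᴴ = P(ψψᴴ)P — if and only if Σ_i conj(V i) · c i = 0. -/

import Mathlib

/-! Since `ψ` has no excited component, every jump operator annihilates `ψψᴴ` from the left
(and its adjoint from the right), so the dissipator vanishes, `L(ψψᴴ) = -i[H, ψψᴴ]`, and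
`ψψᴴ = P(ψψᴴ)P` holds automatically. For Hermitian `H` and `ψ ≠ 0`, `H` commutes with `ψψᴴ`
exactly when `ψ` is an eigenvector of `H`. With scalar ground block,
`Hψ = 𝓔ψ + (Σ_i conj(V i) c i) e₁`, so `ψ` is an eigenvector iff that sum vanishes. -/

open Matrix Complex BigOperators ComplexOrder

/-- Projection onto the ground-state indices. -/
noncomputable def Pg (Ng Ne : ℕ) : Matrix (Fin Ng ⊕ Fin Ne) (Fin Ng ⊕ Fin Ne) ℂ :=
  Matrix.diagonal (Sum.elim (fun _ => 1) (fun _ => 0))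

/-- Projection onto the excited-state indices. -/
noncomputable def Qe (Ng Ne : ℕ) : Matrix (Fin Ng ⊕ Fin Ne) (Fin Ng ⊕ Fin Ne) ℂ :=
  1 - Pg Ng Ne

/-- Jump operator |g_i⟩⟨e_j|. -/
noncomputable def jump (Ng Ne : ℕ) (i : Fin Ng) (j : Fin Ne) :
    Matrix (Fin Ng ⊕ Fin Ne) (Fin Ng ⊕ Fin Ne) ℂ :=
  Matrix.single (Sum.inl i) (Sum.inr j) 1

/-- Decay operator Γ = Σ γ_{ij} σ_{ij}ᴴ σ_{ij}. -/
noncomputable def Gam (Ng Ne : ℕ) (γ : Fin Ng → Fin Ne → ℝ) :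
    Matrix (Fin Ng ⊕ Fin Ne) (Fin Ng ⊕ Fin Ne) ℂ :=
  ∑ i, ∑ j, (γ i j : ℂ) • ((jump Ng Ne i j)ᴴ * jump Ng Ne i j)

/-- The Lindblad generator. -/
noncomputable def Lindblad (Ng Ne : ℕ) (H : Matrix (Fin Ng ⊕ Fin Ne) (Fin Ng ⊕ Fin Ne) ℂ)
    (γ : Fin Ng → Fin Ne → ℝ) (ρ : Matrix (Fin Ng ⊕ Fin Ne) (Fin Ng ⊕ Fin Ne) ℂ) :
    Matrix (Fin Ng ⊕ Fin Ne) (Fin Ng ⊕ Fin Ne) ℂ :=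
  (-Complex.I) • (H * ρ - ρ * H) +
    ∑ i, ∑ j, (γ i j : ℂ) •
      (jump Ng Ne i j * ρ * (jump Ng Ne i j)ᴴ -
        (1 / 2 : ℂ) • ((jump Ng Ne i j)ᴴ * jump Ng Ne i j * ρ +
          ρ * ((jump Ng Ne i j)ᴴ * jump Ng Ne i j)))

/-- A dark state: a density matrix annihilated by the Lindbladian and supported on the
ground-state subspace. -/
def IsDarkState (Ng Ne : ℕ) (H : Matrix (Fin Ng ⊕ Fin Ne) (Fin Ng ⊕ Fin Ne) ℂ)
    (γ : Fin Ng → Fin Ne → ℝ) (ρ : Matrix (Fin Ng ⊕ Fin Ne) (Fin Ng ⊕ Fin Ne) ℂ) : Prop :=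
  ρ.PosSemidef ∧ ρ.trace = 1 ∧ Lindblad Ng Ne H γ ρ = 0 ∧ ρ = Pg Ng Ne * ρ * Pg Ng Ne

namespace Matrix

variable {𝕜 n : Type*} [RCLike 𝕜] [Fintype n]

theorem IsHermitian.vecMulVec_star_mul_self {P : Matrix n n 𝕜} (hP : P.IsHermitian)
    {ψ : n → 𝕜} (hψ : P *ᵥ ψ = ψ) : P * vecMulVec ψ (star ψ) * P = vecMulVec ψ (star ψ) := by
  rw [mul_vecMulVec, hψ, vecMulVec_mul, ← hP.eq, ← star_mulVec, hψ]

theorem IsHermitian.commute_vecMulVec_star_iff {H : Matrix n n 𝕜} (hH : H.IsHermitian)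
    {ψ : n → 𝕜} (hψ : ψ ≠ 0) :
    Commute H (vecMulVec ψ (star ψ)) ↔ ∃ μ : 𝕜, H *ᵥ ψ = μ • ψ := by
  have hstar : star (H *ᵥ ψ) = star ψ ᵥ* H := by rw [star_mulVec, hH.eq]
  have hnorm : star ψ ⬝ᵥ ψ ≠ 0 := by simpa using hψ
  rw [Commute, SemiconjBy, mul_vecMulVec, vecMulVec_mul, ← hstar]
  constructor
  · intro h
    have happly := congrArg (· *ᵥ ψ) h
    simp only [vecMulVec_mulVec, op_smul_eq_smul] at happly
    refine ⟨(star ψ ⬝ᵥ ψ)⁻¹ * (star (H *ᵥ ψ) ⬝ᵥ ψ), ?_⟩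
    rw [mul_smul, ← happly, smul_smul, inv_mul_cancel₀ hnorm, one_smul]
  · rintro ⟨μ, hμ⟩
    -- `μ` is real: `μ ‖ψ‖² = ⟨ψ, Hψ⟩ = ⟨Hψ, ψ⟩ = μ̄ ‖ψ‖²`.
    have hμ_real : star μ = μ := by
      have h := dotProduct_mulVec (star ψ) H ψ
      rw [← hstar, hμ, dotProduct_smul, star_smul, smul_dotProduct] at h
      exact mul_right_cancel₀ hnorm h.symm
    rw [hμ, star_smul, smul_vecMulVec, vecMulVec_smul, hμ_real]

end Matrix

section GroundSupported

variable {Ng Ne : ℕ} {ψ : Fin Ng ⊕ Fin Ne → ℂ}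

theorem isHermitian_Pg (Ng Ne : ℕ) : (Pg Ng Ne).IsHermitian :=
  isHermitian_diagonal_of_self_adjoint _ <| by
    ext (i | j) <;> simp

theorem Pg_mulVec_eq_self_iff : Pg Ng Ne *ᵥ ψ = ψ ↔ ∀ j, ψ (Sum.inr j) = 0 := by
  simp [Pg, funext_iff, mulVec_diagonal, eq_comm]

theorem jump_mul_vecMulVec_eq_zero {i : Fin Ng} {j : Fin Ne} (hψ : ψ (Sum.inr j) = 0)
    (φ : Fin Ng ⊕ Fin Ne → ℂ) : jump Ng Ne i j * vecMulVec ψ φ = 0 := by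
  ext a b
  simp [jump, mul_vecMulVec, vecMulVec_apply, Matrix.single_mulVec, hψ]

theorem vecMulVec_star_mul_jump_conjTranspose_eq_zero {i : Fin Ng} {j : Fin Ne}
    (hψ : ψ (Sum.inr j) = 0) : vecMulVec ψ (star ψ) * (jump Ng Ne i j)ᴴ = 0 := by
  rw [← (posSemidef_vecMulVec_self_star ψ).isHermitian.eq, ← conjTranspose_mul,
    jump_mul_vecMulVec_eq_zero hψ, conjTranspose_zero]

theorem Lindblad_vecMulVec_star (H : Matrix (Fin Ng ⊕ Fin Ne) (Fin Ng ⊕ Fin Ne) ℂ)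
    (γ : Fin Ng → Fin Ne → ℝ) (hψ : ∀ j, ψ (Sum.inr j) = 0) :
    Lindblad Ng Ne H γ (vecMulVec ψ (star ψ)) =
      (-Complex.I) • (H * vecMulVec ψ (star ψ) - vecMulVec ψ (star ψ) * H) := by
  refine add_eq_left.mpr (Finset.sum_eq_zero fun i _ => Finset.sum_eq_zero fun j _ => ?_)
  rw [jump_mul_vecMulVec_eq_zero (hψ j), Matrix.mul_assoc, jump_mul_vecMulVec_eq_zero (hψ j),
    ← Matrix.mul_assoc, vecMulVec_star_mul_jump_conjTranspose_eq_zero (hψ j)]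
  simp

end GroundSupported

section ScalarGroundBlock

variable {Ng Ne : ℕ} {H : Matrix (Fin Ng ⊕ Fin Ne) (Fin Ng ⊕ Fin Ne) ℂ} {𝓔 : ℝ}
  {ψ : Fin Ng ⊕ Fin Ne → ℂ}

theorem mulVec_inl_of_ground_block_eq_scalar
    (hgg : ∀ i i' : Fin Ng, H (Sum.inl i) (Sum.inl i') = if i = i' then (𝓔 : ℂ) else 0)
    (hψ : ∀ j, ψ (Sum.inr j) = 0) (i : Fin Ng) :
    (H *ᵥ ψ) (Sum.inl i) = 𝓔 * ψ (Sum.inl i) := by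
  simp [mulVec, dotProduct, Fintype.sum_sum_type, hgg, hψ]

theorem Matrix.IsHermitian.mulVec_inr_of_ground (hH : H.IsHermitian)
    (hψ : ∀ j, ψ (Sum.inr j) = 0) (j : Fin Ne) :
    (H *ᵥ ψ) (Sum.inr j) = ∑ i, starRingEnd ℂ (H (Sum.inl i) (Sum.inr j)) * ψ (Sum.inl i) := by
  simp only [mulVec, dotProduct, Fintype.sum_sum_type, hψ, mul_zero, Finset.sum_const_zero,
    add_zero]
  exact Finset.sum_congr rfl fun i _ => by rw [← hH.apply]; rfl

theorem exists_mulVec_eq_smul_iff_of_ground_block_eq_scalar (hH : H.IsHermitian)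
    (hgg : ∀ i i' : Fin Ng, H (Sum.inl i) (Sum.inl i') = if i = i' then (𝓔 : ℂ) else 0)
    (hψ : ∀ j, ψ (Sum.inr j) = 0) :
    (∃ μ : ℂ, H *ᵥ ψ = μ • ψ) ↔
      ∀ j, ∑ i, starRingEnd ℂ (H (Sum.inl i) (Sum.inr j)) * ψ (Sum.inl i) = 0 := by
  constructor
  · rintro ⟨μ, hμ⟩ j
    simpa [← hH.mulVec_inr_of_ground hψ, hψ] using congrFun hμ (Sum.inr j)
  · intro hV
    refine ⟨𝓔, funext fun a => ?_⟩
    rcases a with i | j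
    · simp [mulVec_inl_of_ground_block_eq_scalar hgg hψ]
    · simp [hH.mulVec_inr_of_ground hψ, hV, hψ]

end ScalarGroundBlock

theorem fan_system_dark_state_iff_general
    (Ng : ℕ)
    (H : Matrix (Fin Ng ⊕ Fin 1) (Fin Ng ⊕ Fin 1) ℂ) (hH : H.IsHermitian)
    (𝓔 : ℝ)
    (hgg : ∀ i i' : Fin Ng,
      H (Sum.inl i) (Sum.inl i') = if i = i' then (𝓔 : ℂ) else 0)
    (γ : Fin Ng → ℝ)
    (ψ : Fin Ng ⊕ Fin 1 → ℂ) (hunit : star ψ ⬝ᵥ ψ = 1)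
    (hψP : Pg Ng 1 *ᵥ ψ = ψ) :
    (Lindblad Ng 1 H (fun i _ => γ i) (vecMulVec ψ (star ψ)) = 0 ∧
      vecMulVec ψ (star ψ) = Pg Ng 1 * vecMulVec ψ (star ψ) * Pg Ng 1) ↔
    ∑ i, starRingEnd ℂ (H (Sum.inl i) (Sum.inr 0)) * ψ (Sum.inl i) = 0 := by
  have hψ := Pg_mulVec_eq_self_iff.mp hψP
  have hψ_ne : ψ ≠ 0 := by
    rintro rfl
    simp at hunit
  rw [(isHermitian_Pg Ng 1).vecMulVec_star_mul_self hψP, and_iff_left rfl,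
    Lindblad_vecMulVec_star H _ hψ, smul_eq_zero_iff_right (neg_ne_zero.mpr Complex.I_ne_zero),
    sub_eq_zero, ← commute_iff_eq, hH.commute_vecMulVec_star_iff hψ_ne,
    exists_mulVec_eq_smul_iff_of_ground_block_eq_scalar hH hgg hψ, Fin.forall_fin_one]

theorem fan_system_dark_state_iff
    (Ng : ℕ) (hNg : 1 ≤ Ng)
    (H : Matrix (Fin Ng ⊕ Fin 1) (Fin Ng ⊕ Fin 1) ℂ) (hH : H.IsHermitian)
    (𝓔 : ℝ)
    (hgg : ∀ i i' : Fin Ng,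
      H (Sum.inl i) (Sum.inl i') = if i = i' then (𝓔 : ℂ) else 0)
    (γ : Fin Ng → ℝ) (hγ : ∀ i, 0 ≤ γ i) (hγpos : 0 < ∑ i, γ i)
    (ψ : Fin Ng ⊕ Fin 1 → ℂ) (hunit : star ψ ⬝ᵥ ψ = 1)
    (hψP : Pg Ng 1 *ᵥ ψ = ψ) :
    (Lindblad Ng 1 H (fun i _ => γ i) (vecMulVec ψ (star ψ)) = 0 ∧
      vecMulVec ψ (star ψ) = Pg Ng 1 * vecMulVec ψ (star ψ) * Pg Ng 1) ↔
    ∑ i, starRingEnd ℂ (H (Sum.inl i) (Sum.inr 0)) * ψ (Sum.inl i) = 0 :=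
  fan_system_dark_state_iff_general Ng H hH 𝓔 hgg γ ψ hunit hψP
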